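/- Let Φ be a finite crystallographic root system with simple roots Δ, and let α, β ∈ Δ with a·α + b·β ∈ Φ⁺ for positive integers a, b. Then Δ' = {aα + bβ} ∪ (Δ \ {α, β}) is the set of simple roots of the root subsystem Φ' = Φ ∩ span(Δ'), i.e., every element of Φ⁺ ∩ Φ' is a nonnegative integer combination of elements of Δ'. -/

import Mathlib

open scoped RealInnerProductSpace

/-- A finite crystallographic (reduced) root system in a Euclidean space `V`. -/
structure RootSystemData (V : Type*) [NormedAddCommGroup V] [InnerProductSpace ℝ V] where
  Φ : Set V
  finite : Φ.Finite
  nonzero : ∀ γ ∈ Φ, γ ≠ 0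
  neg_mem : ∀ γ ∈ Φ, -γ ∈ Φ
  reflect_mem : ∀ α ∈ Φ, ∀ β ∈ Φ, β - (2 * ⟪α, β⟫ / ⟪α, α⟫) • α ∈ Φ
  crystallographic : ∀ α ∈ Φ, ∀ β ∈ Φ, ∃ n : ℤ, 2 * ⟪α, β⟫ / ⟪α, α⟫ = (n : ℝ)
  reduced : ∀ γ ∈ Φ, ∀ t : ℝ, t • γ ∈ Φ → t = 1 ∨ t = -1

/-- A base (system of simple roots) for a root system: the simple roots form a basis of `V`
and every root has coordinates that are all nonnegative integers or all nonpositive integers. -/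
structure RootBase {V : Type*} [NormedAddCommGroup V] [InnerProductSpace ℝ V]
    (R : RootSystemData V) (ι : Type*) [Fintype ι] where
  b : Module.Basis ι ℝ V
  simple_mem : ∀ i, b i ∈ R.Φ
  coord_sign : ∀ γ ∈ R.Φ, (∀ i, 0 ≤ b.repr γ i) ∨ (∀ i, b.repr γ i ≤ 0)
  coord_int : ∀ γ ∈ R.Φ, ∀ i, ∃ n : ℤ, b.repr γ i = (n : ℝ)

namespace RootBase

variable {V : Type*} [NormedAddCommGroup V] [InnerProductSpace ℝ V]
  {R : RootSystemData V} {ι : Type*} [Fintype ι]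

/-- `γ` is a positive root. -/
def IsPos (B : RootBase R ι) (γ : V) : Prop := γ ∈ R.Φ ∧ ∀ i, 0 ≤ B.b.repr γ i

/-- The set of positive roots. -/
def Pos (B : RootBase R ι) : Set V := {γ | B.IsPos γ}

/-- The root poset order: coordinatewise comparison over the simple roots. -/
def rle (B : RootBase R ι) (γ γ' : V) : Prop := ∀ i, B.b.repr γ i ≤ B.b.repr γ' i

end RootBase

/-- All roots have the same length. -/
def RootSystemData.SimplyLaced {V : Type*} [NormedAddCommGroup V] [InnerProductSpace ℝ V]
    (R : RootSystemData V) : Prop := ∀ γ ∈ R.Φ, ∀ γ' ∈ R.Φ, ⟪γ, γ⟫ = ⟪γ', γ'⟫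

/-!
Induction on the height of `γ`. A positive root `γ ∈ span Δ'` has nonnegative coordinates along
`Δ'`, namely `γ = c • δ + ∑ₖ γₖ αₖ` with `c = γᵢ / a`, and expanding `0 < ⟪γ, γ⟫` in them gives
some `β ∈ Δ'` with positive coefficient and `0 < ⟪β, γ⟫`. Unless `γ = β`, the difference `γ - β` of
two roots at an acute angle is a root, and it is positive: for `β = αₖ` because the integer `γₖ` is
at least `1`, for `β = δ` because `γ`, not being a multiple of `δ`, has a positive coordinate off
`{i, j}`. As `γ - β` has smaller height, `γ = (γ - β) + β` is a sum of elements of `Δ'`.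
-/

namespace RootSystemData

variable {V : Type*} [NormedAddCommGroup V] [InnerProductSpace ℝ V] (R : RootSystemData V)
  {γ γ' : V}

theorem eq_one_of_smul_mem (hγ : γ ∈ R.Φ) {t : ℝ} (ht : 0 < t) (h : t • γ ∈ R.Φ) : t = 1 :=
  (R.reduced γ hγ t h).resolve_right (by linarith)

theorem inner_lt_norm_mul_norm (hγ : γ ∈ R.Φ) (hγ' : γ' ∈ R.Φ) (hne : γ ≠ γ') :
    ⟪γ, γ'⟫ < ‖γ‖ * ‖γ'‖ := by
  refine inner_lt_norm_mul_iff_real.mpr fun h => hne ?_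
  have hγ'0 : ‖γ'‖ ≠ 0 := norm_ne_zero_iff.mpr (R.nonzero γ' hγ')
  have hprop : γ = (‖γ‖ / ‖γ'‖) • γ' := by
    rw [div_eq_inv_mul, mul_smul, ← h, smul_smul, inv_mul_cancel₀ hγ'0, one_smul]
  have hratio : 0 < ‖γ‖ / ‖γ'‖ := by
    have := R.nonzero γ hγ
    positivity
  rw [hprop, R.eq_one_of_smul_mem hγ' hratio (hprop ▸ hγ), one_smul]

/-- By strict Cauchy–Schwarz the two (positive) Cartan integers multiply to less than `4`. -/
theorem cartan_eq_one_or_cartan_eq_one (hγ : γ ∈ R.Φ) (hγ' : γ' ∈ R.Φ) (hne : γ ≠ γ')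
    (hpos : 0 < ⟪γ, γ'⟫) :
    2 * ⟪γ, γ'⟫ / ⟪γ, γ⟫ = 1 ∨ 2 * ⟪γ', γ⟫ / ⟪γ', γ'⟫ = 1 := by
  obtain ⟨q, hq⟩ := R.crystallographic γ hγ γ' hγ'
  obtain ⟨p, hp⟩ := R.crystallographic γ' hγ' γ hγ
  have hγγ : 0 < ⟪γ, γ⟫ := real_inner_self_pos.mpr (R.nonzero γ hγ)
  have hγ'γ' : 0 < ⟪γ', γ'⟫ := real_inner_self_pos.mpr (R.nonzero γ' hγ')
  rw [hq, hp]
  have hq0 : (0 : ℝ) < q := hq ▸ by positivity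
  have hp0 : (0 : ℝ) < p := hp ▸ by rw [real_inner_comm]; positivity
  have hqp : (q * p : ℝ) < 4 := by
    have hcs : ⟪γ, γ'⟫ * ⟪γ, γ'⟫ < ⟪γ, γ⟫ * ⟪γ', γ'⟫ := by
      have h := R.inner_lt_norm_mul_norm hγ hγ' hne
      rw [real_inner_self_eq_norm_mul_norm, real_inner_self_eq_norm_mul_norm]
      nlinarith
    have hprod : (q * p : ℝ) * (⟪γ, γ⟫ * ⟪γ', γ'⟫) = 4 * (⟪γ, γ'⟫ * ⟪γ, γ'⟫) := by
      rw [← hq, ← hp, real_inner_comm γ' γ]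
      field_simp
      ring
    nlinarith
  have hq1 : 0 < q := by exact_mod_cast hq0
  have hp1 : 0 < p := by exact_mod_cast hp0
  have hqp' : q * p < 4 := by exact_mod_cast hqp
  have : q = 1 ∨ p = 1 := by
    rcases le_or_gt q 1 with h | h
    · exact Or.inl (by omega)
    · right; nlinarith
  exact_mod_cast this

theorem sub_mem_of_inner_pos (hγ : γ ∈ R.Φ) (hγ' : γ' ∈ R.Φ) (hne : γ ≠ γ')
    (hpos : 0 < ⟪γ, γ'⟫) : γ - γ' ∈ R.Φ := by
  rcases R.cartan_eq_one_or_cartan_eq_one hγ hγ' hne hpos with h | h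
  · have := R.neg_mem _ (R.reflect_mem γ hγ γ' hγ')
    rwa [h, one_smul, neg_sub] at this
  · have := R.reflect_mem γ' hγ' γ hγ
    rwa [h, one_smul] at this

end RootSystemData

section ReplacePair

variable {ι : Type*} {i j : ι}

/-- The paper's `Δ'`, for `Δ = Set.range v` and `δ = aα + bβ`. -/
def replacePair {M : Type*} (v : ι → M) (i j : ι) (δ : M) : Set M :=
  {δ} ∪ (Set.range v \ {v i, v j})

theorem exists_eq_smul_add_sum_of_mem_closure_replacePair [Fintype ι] [DecidableEq ι]
    {K M : Type*} [Semiring K] [AddCommMonoid M] [Module K M] {v : ι → M} {δ x : M}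
    (hx : x ∈ AddSubmonoid.closure (replacePair v i j δ)) :
    ∃ (n : ℕ) (m : ι → ℕ), x = (n : K) • δ + ∑ k ∈ Finset.univ \ {i, j}, (m k : K) • v k := by
  induction hx using AddSubmonoid.closure_induction with
  | mem x hx =>
    rcases hx with rfl | ⟨⟨k, rfl⟩, hk⟩
    · exact ⟨1, 0, by simp⟩
    · refine ⟨0, Pi.single k 1, ?_⟩
      have hks : k ∈ Finset.univ \ {i, j} := by
        simp only [Set.mem_insert_iff, Set.mem_singleton_iff, not_or] at hk
        simp only [Finset.mem_sdiff, Finset.mem_univ, Finset.mem_insert, Finset.mem_singleton,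
          true_and, not_or]
        exact ⟨fun h => hk.1 (h ▸ rfl), fun h => hk.2 (h ▸ rfl)⟩
      simp [Pi.single_apply, hks]
  | zero => exact ⟨0, 0, by simp⟩
  | add x y _ _ hx hy =>
    obtain ⟨n, m, rfl⟩ := hx
    obtain ⟨n', m', rfl⟩ := hy
    refine ⟨n + n', m + m', ?_⟩
    simp only [Nat.cast_add, Pi.add_apply, add_smul, Finset.sum_add_distrib]
    abel

namespace Module.Basis

variable {K V : Type*} [Field K] [AddCommGroup V] [Module K V] (e : Basis ι K V) (a b : K)

theorem mul_repr_eq_mul_repr_of_mem_span_replacePair (hij : i ≠ j) {x : V}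
    (hx : x ∈ Submodule.span K (replacePair e i j (a • e i + b • e j))) :
    b * e.repr x i = a * e.repr x j := by
  let f : V →ₗ[K] K := b • e.coord i - a • e.coord j
  suffices x ∈ LinearMap.ker f by simpa [f, sub_eq_zero] using this
  refine Submodule.span_le.mpr ?_ hx
  rintro _ (rfl | ⟨⟨k, rfl⟩, hk⟩)
  · simp [f, hij, hij.symm, mul_comm]
  · simp only [Set.mem_insert_iff, Set.mem_singleton_iff, not_or] at hk
    have hki : k ≠ i := fun h => hk.1 (h ▸ rfl)
    have hkj : k ≠ j := fun h => hk.2 (h ▸ rfl)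
    simp [f, hki, hkj]

theorem eq_smul_add_sum_of_mem_span_replacePair [Fintype ι] [DecidableEq ι] (hij : i ≠ j)
    (ha : a ≠ 0) {x : V}
    (hx : x ∈ Submodule.span K (replacePair e i j (a • e i + b • e j))) :
    x = (e.repr x i / a) • (a • e i + b • e j) +
      ∑ k ∈ Finset.univ \ {i, j}, e.repr x k • e k := by
  have hrel := e.mul_repr_eq_mul_repr_of_mem_span_replacePair a b hij hx
  have hj : e.repr x i / a * b = e.repr x j := by
    rw [div_mul_eq_mul_div, mul_comm, hrel, mul_div_cancel_left₀ _ ha]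
  conv_lhs => rw [← e.sum_repr x, ← Finset.sum_sdiff (Finset.subset_univ {i, j}),
    Finset.sum_pair hij]
  rw [smul_add, smul_smul, smul_smul, div_mul_cancel₀ _ ha, hj]
  abel

end Module.Basis

end ReplacePair

namespace RootBase

variable {V : Type*} [NormedAddCommGroup V] [InnerProductSpace ℝ V]
  {R : RootSystemData V} {ι : Type*} [Fintype ι] (B : RootBase R ι) {γ δ : V}

noncomputable def height (γ : V) : ℝ := ∑ k, B.b.repr γ k

theorem height_sub (γ δ : V) : B.height (γ - δ) = B.height γ - B.height δ := by
  simp [height, Finset.sum_sub_distrib]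

variable {B}

theorem isPos_simple (k : ι) : B.IsPos (B.b k) :=
  ⟨B.simple_mem k, fun l => by
    rw [B.b.repr_self]
    exact Finsupp.single_nonneg.mpr zero_le_one l⟩

theorem isPos_of_mem_of_repr_pos (hγ : γ ∈ R.Φ) {l : ι} (hl : 0 < B.b.repr γ l) : B.IsPos γ :=
  ⟨hγ, (B.coord_sign γ hγ).resolve_right fun h => (h l).not_gt hl⟩

theorem IsPos.height_pos (hγ : B.IsPos γ) : 0 < B.height γ := by
  obtain ⟨l, hl⟩ : ∃ l, B.b.repr γ l ≠ 0 := by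
    by_contra! h
    exact R.nonzero γ hγ.1 (B.b.repr.injective (Finsupp.ext fun l => by simp [h l]))
  exact Finset.sum_pos' (fun k _ => hγ.2 k) ⟨l, Finset.mem_univ l, (hγ.2 l).lt_of_ne' hl⟩

theorem IsPos.exists_natCast_eq_repr (hγ : B.IsPos γ) (k : ι) :
    ∃ n : ℕ, (n : ℝ) = B.b.repr γ k := by
  obtain ⟨z, hz⟩ := B.coord_int γ hγ.1 k
  have hz0 : 0 ≤ z := by exact_mod_cast hz ▸ hγ.2 k
  exact ⟨z.toNat, by rw [hz]; exact_mod_cast Int.toNat_of_nonneg hz0⟩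

theorem IsPos.exists_natCast_eq_height (hγ : B.IsPos γ) : ∃ n : ℕ, (n : ℝ) = B.height γ := by
  choose m hm using hγ.exists_natCast_eq_repr
  exact ⟨∑ k, m k, by simp [height, hm]⟩

theorem IsPos.eq_or_isPos_sub_simple (hγ : B.IsPos γ) {k : ι} (hk : 0 < B.b.repr γ k)
    (hinner : 0 < ⟪B.b k, γ⟫) : γ = B.b k ∨ B.IsPos (γ - B.b k) := by
  refine or_iff_not_imp_left.mpr fun hne => ⟨?_, fun l => ?_⟩
  · exact R.sub_mem_of_inner_pos hγ.1 (B.simple_mem k) hne (by rwa [real_inner_comm])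
  · obtain ⟨n, hn⟩ := hγ.exists_natCast_eq_repr k
    have h1 : 1 ≤ B.b.repr γ k := by
      rw [← hn] at hk ⊢
      exact_mod_cast hk
    rcases eq_or_ne k l with rfl | hkl
    · simpa using h1
    · simpa [Finsupp.single_apply, hkl] using hγ.2 l

theorem IsPos.eq_or_isPos_sub_of_eq_smul_add_sum [DecidableEq ι] (hγ : B.IsPos γ)
    (hδ : B.IsPos δ) {s : Finset ι} (hδs : ∀ k ∈ s, B.b.repr δ k = 0) {c : ℝ} (hc : 0 < c)
    (hdec : γ = c • δ + ∑ k ∈ s, B.b.repr γ k • B.b k) (hinner : 0 < ⟪δ, γ⟫) :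
    γ = δ ∨ B.IsPos (γ - δ) := by
  by_cases hs : ∃ l ∈ s, B.b.repr γ l ≠ 0
  · right
    obtain ⟨l, hl, hγl⟩ := hs
    have hne : γ ≠ δ := fun h => hγl (h ▸ hδs l hl)
    have hsub := R.sub_mem_of_inner_pos hγ.1 hδ.1 hne (by rwa [real_inner_comm])
    refine isPos_of_mem_of_repr_pos hsub (l := l) ?_
    simpa [hδs l hl] using (hγ.2 l).lt_of_ne' hγl
  · left
    simp only [not_exists, not_and, not_not] at hs
    rw [Finset.sum_eq_zero fun k hk => by rw [hs k hk, zero_smul], add_zero] at hdec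
    rw [hdec, R.eq_one_of_smul_mem hδ.1 hc (hdec ▸ hγ.1), one_smul]

variable {i j : ι} {a b : ℝ}

theorem isPos_of_mem_replacePair (hδ : B.IsPos (a • B.b i + b • B.b j)) {β : V}
    (hβ : β ∈ replacePair B.b i j (a • B.b i + b • B.b j)) : B.IsPos β := by
  rcases hβ with rfl | ⟨⟨k, rfl⟩, -⟩
  exacts [hδ, isPos_simple k]

theorem exists_mem_replacePair_eq_or_isPos_sub [DecidableEq ι] (hij : i ≠ j) (ha : 0 < a)
    (hδ : B.IsPos (a • B.b i + b • B.b j)) (hγ : B.IsPos γ)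
    (hspan : γ ∈ Submodule.span ℝ (replacePair B.b i j (a • B.b i + b • B.b j))) :
    ∃ β ∈ replacePair B.b i j (a • B.b i + b • B.b j), γ = β ∨ B.IsPos (γ - β) := by
  set δ := a • B.b i + b • B.b j
  set s := Finset.univ \ {i, j}
  have hdec := B.b.eq_smul_add_sum_of_mem_span_replacePair a b hij ha.ne' hspan
  set c := B.b.repr γ i / a
  have hnorm : 0 < c * ⟪δ, γ⟫ + ∑ k ∈ s, B.b.repr γ k * ⟪B.b k, γ⟫ := by
    have h := congrArg (⟪·, γ⟫) hdec
    rw [inner_add_left, real_inner_smul_left, sum_inner] at h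
    simp only [real_inner_smul_left] at h
    exact h ▸ real_inner_self_pos.mpr (R.nonzero γ hγ.1)
  by_cases hcδ : 0 < c * ⟪δ, γ⟫
  · have hinner := pos_of_mul_pos_right hcδ (div_nonneg (hγ.2 i) ha.le)
    have hδs : ∀ k ∈ s, B.b.repr δ k = 0 := by
      intro k hk
      simp only [s, Finset.mem_sdiff, Finset.mem_insert, Finset.mem_singleton, not_or] at hk
      simp [δ, Ne.symm hk.2.1, Ne.symm hk.2.2]
    exact ⟨δ, Or.inl rfl, hγ.eq_or_isPos_sub_of_eq_smul_add_sum hδ hδs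
      (pos_of_mul_pos_left hcδ hinner.le) hdec hinner⟩
  · obtain ⟨k, hk, hck⟩ : ∃ k ∈ s, 0 < B.b.repr γ k * ⟪B.b k, γ⟫ := by
      by_contra! h
      linarith [Finset.sum_nonpos h]
    have hinner := pos_of_mul_pos_right hck (hγ.2 k)
    simp only [s, Finset.mem_sdiff, Finset.mem_insert, Finset.mem_singleton, not_or] at hk
    refine ⟨B.b k, Or.inr ⟨⟨k, rfl⟩, ?_⟩,
      hγ.eq_or_isPos_sub_simple (pos_of_mul_pos_left hck hinner.le) hinner⟩
    simp only [Set.mem_insert_iff, Set.mem_singleton_iff, B.b.injective.eq_iff]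
    tauto

theorem mem_closure_replacePair_of_isPos [DecidableEq ι] (hij : i ≠ j) (ha : 0 < a)
    (hδ : B.IsPos (a • B.b i + b • B.b j)) (hγ : B.IsPos γ)
    (hspan : γ ∈ Submodule.span ℝ (replacePair B.b i j (a • B.b i + b • B.b j))) :
    γ ∈ AddSubmonoid.closure (replacePair B.b i j (a • B.b i + b • B.b j)) := by
  obtain ⟨n, hn⟩ := hγ.exists_natCast_eq_height
  induction n using Nat.strong_induction_on generalizing γ with
  | _ n ih =>
    obtain ⟨β, hβ, rfl | hsub⟩ := exists_mem_replacePair_eq_or_isPos_sub hij ha hδ hγ hspan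
    · exact AddSubmonoid.subset_closure hβ
    obtain ⟨m, hm⟩ := hsub.exists_natCast_eq_height
    have hlt : m < n := by
      have := (isPos_of_mem_replacePair hδ hβ).height_pos
      rw [height_sub, ← hn] at hm
      exact_mod_cast (by linarith : (m : ℝ) < n)
    have hrest := ih m hlt hsub (Submodule.sub_mem _ hspan (Submodule.subset_span hβ)) hm
    simpa using add_mem hrest (AddSubmonoid.subset_closure hβ)

end RootBase

theorem subsystem_simple_roots_general {V : Type*} [NormedAddCommGroup V] [InnerProductSpace ℝ V]
    {ι : Type*} [Fintype ι] [DecidableEq ι] (R : RootSystemData V) (B : RootBase R ι)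
    (i j : ι) (hij : i ≠ j) (a b : ℕ) (ha : 0 < a)
    (hroot : B.IsPos ((a : ℝ) • B.b i + (b : ℝ) • B.b j)) :
    ∀ γ, B.IsPos γ →
      γ ∈ (Submodule.span ℝ ({(a : ℝ) • B.b i + (b : ℝ) • B.b j} ∪
            (Set.range B.b \ {B.b i, B.b j})) : Set V) →
      ∃ (n : ℕ) (m : ι → ℕ), γ = (n : ℝ) • ((a : ℝ) • B.b i + (b : ℝ) • B.b j) +
        ∑ k ∈ Finset.univ \ {i, j}, (m k : ℝ) • B.b k := fun _ hγ hspan =>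
  exists_eq_smul_add_sum_of_mem_closure_replacePair
    (RootBase.mem_closure_replacePair_of_isPos hij (by exact_mod_cast ha) hroot hγ hspan)

/-- If α, β are simple roots with aα + bβ a positive root (a, b positive integers), then
Δ' = {aα + bβ} ∪ Δ \ {α, β} is a set of simple roots for the subsystem Φ' = Φ ∩ span Δ':
every positive root of Φ lying in span Δ' is a nonnegative integer combination of Δ'. -/
theorem subsystem_simple_roots {V : Type*} [NormedAddCommGroup V] [InnerProductSpace ℝ V]
    {ι : Type*} [Fintype ι] [DecidableEq ι] (R : RootSystemData V) (B : RootBase R ι)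
    (i j : ι) (hij : i ≠ j) (a b : ℕ) (ha : 0 < a) (hb : 0 < b)
    (hroot : B.IsPos ((a : ℝ) • B.b i + (b : ℝ) • B.b j)) :
    ∀ γ, B.IsPos γ →
      γ ∈ (Submodule.span ℝ ({(a : ℝ) • B.b i + (b : ℝ) • B.b j} ∪
            (Set.range B.b \ {B.b i, B.b j})) : Set V) →
      ∃ (n : ℕ) (m : ι → ℕ), γ = (n : ℝ) • ((a : ℝ) • B.b i + (b : ℝ) • B.b j) +
        ∑ k ∈ Finset.univ \ {i, j}, (m k : ℝ) • B.b k :=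
  subsystem_simple_roots_general R B i j hij a b ha hroot
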